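/- The dynamic oracle is always executable: for every valid non-final configuration c, dyna(c) is nonempty and every action in dyna(c) is applicable at c (in particular, at even steps the case analysis on next(c) = (X, p, q) versus the top span (i, j) always falls into one of the three cases p = i ∧ q > j, p < i ∧ q = j, or p < i ∧ q > j). -/

import Mathlib

/-!
Formalization of the span-based Structure/Label transition parsing system of
Cross & Huang (2016), "Span-Based Constituency Parsing with a Structure-Label
System and Provably Optimal Dynamic Oracles".

A configuration is `(z, σ, t)` where `z` is the step number, `σ` the stack of
span boundaries and `t` the set of brackets built so far.  A bracket is a
triple `(X, i, j)` with `X` a nonterminal label and `i < j ≤ n` a span.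
-/

namespace SpanParser

structure Config (N : Type*) where
  z : ℕ
  σ : List ℕ
  t : Finset (N × ℕ × ℕ)

variable {N : Type*}

/-- The span of a bracket. -/
def span (b : N × ℕ × ℕ) : ℕ × ℕ := b.2

/-- Top (rightmost) boundary of the stack. -/
def topJ (σ : List ℕ) : ℕ := σ.getLastD 0

/-- Second-to-top boundary of the stack. -/
def topI (σ : List ℕ) : ℕ := σ.dropLast.getLastD 0

/-- Parser actions: shift, combine, label-`X`, and nolabel. -/
inductive Action (N : Type*) where
  | sh : Action N
  | comb : Action N
  | label : N → Action N
  | nolabel : Action N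

variable [DecidableEq N]

/-- Applicability of an action at a configuration (for sentence length `n`). -/
def App (n : ℕ) (c : Config N) : Action N → Prop
  | .sh      => Even c.z ∧ c.σ ≠ [] ∧ topJ c.σ < n
  | .comb    => Even c.z ∧ 3 ≤ c.σ.length
  | .label _ => Odd c.z ∧ 2 ≤ c.σ.length
  | .nolabel => Odd c.z ∧ 2 ≤ c.σ.length ∧ c.z < 4 * n - 1

/-- The result `τ(c)` of applying action `τ` to configuration `c`. -/
def doAct (c : Config N) : Action N → Config N
  | .sh      => ⟨c.z + 1, c.σ ++ [topJ c.σ + 1], c.t⟩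
  | .comb    => ⟨c.z + 1, c.σ.dropLast.dropLast ++ [topJ c.σ], c.t⟩
  | .label X => ⟨c.z + 1, c.σ, insert (X, topI c.σ, topJ c.σ) c.t⟩
  | .nolabel => ⟨c.z + 1, c.σ, c.t⟩

/-- The initial configuration `(0, [0], ∅)`. -/
def initial (N : Type*) : Config N := ⟨0, [0], ∅⟩

/-- One transition step `c ⊢ c'`. -/
def Step (n : ℕ) (c c' : Config N) : Prop := ∃ a, App n c a ∧ c' = doAct c a

/-- `⊢*`: reflexive-transitive closure of the transition relation. -/
def Reaches (n : ℕ) : Config N → Config N → Prop := Relation.ReflTransGen (Step n)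

/-- A configuration is valid if it is reachable from the initial configuration. -/
def Valid (n : ℕ) (c : Config N) : Prop := Reaches n (initial N) c

/-- A final configuration: `σ = [0, n]` and `z = 4n - 2`. -/
def Final (n : ℕ) (c : Config N) : Prop := c.σ = [0, n] ∧ c.z = 4 * n - 2

/-- `D(c)`: the set of trees of final configurations reachable from `c`. -/
def Dset (n : ℕ) (c : Config N) : Set (Finset (N × ℕ × ℕ)) :=
  {t' | ∃ c', Reaches n c c' ∧ Final n c' ∧ c'.t = t'}

/-- `(i,j) ⪯ (p,q)`: span `(i,j)` is encompassed by `(p,q)`, i.e. `p ≤ i < j ≤ q`. -/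
def Enc (s₁ s₂ : ℕ × ℕ) : Prop := s₂.1 ≤ s₁.1 ∧ s₁.1 < s₁.2 ∧ s₁.2 ≤ s₂.2

/-- `(i,j) ≺ (p,q)`: strict encompassment. -/
def SEnc (s₁ s₂ : ℕ × ℕ) : Prop := Enc s₁ s₂ ∧ s₁ ≠ s₂

/-- `tG` is a gold tree for sentence length `n`: valid spans, pairwise-distinct
spans, pairwise non-crossing spans, and exactly one bracket with span `(0, n)`
(uniqueness follows from distinctness of spans). -/
structure IsGold (n : ℕ) (tG : Finset (N × ℕ × ℕ)) : Prop where
  validSpans : ∀ b ∈ tG, (span b).1 < (span b).2 ∧ (span b).2 ≤ n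
  distinctSpans : ∀ b₁ ∈ tG, ∀ b₂ ∈ tG, span b₁ = span b₂ → b₁ = b₂
  noncrossing : ∀ b₁ ∈ tG, ∀ b₂ ∈ tG,
    Enc (span b₁) (span b₂) ∨ Enc (span b₂) (span b₁) ∨
    (span b₁).2 ≤ (span b₂).1 ∨ (span b₂).2 ≤ (span b₁).1
  root : ∃ X, (X, 0, n) ∈ tG

open Classical in
/-- `left(c)`: gold brackets (strictly, at even steps) encompassing the top
span whose left boundary occurs on the stack. -/
noncomputable def leftSet (tG : Finset (N × ℕ × ℕ)) (c : Config N) :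
    Finset (N × ℕ × ℕ) :=
  tG.filter fun b =>
    (if Even c.z then SEnc (topI c.σ, topJ c.σ) (span b)
     else Enc (topI c.σ, topJ c.σ) (span b)) ∧ (span b).1 ∈ c.σ

open Classical in
/-- `right(c)`: gold brackets entirely on the queue. -/
noncomputable def rightSet (tG : Finset (N × ℕ × ℕ)) (c : Config N) :
    Finset (N × ℕ × ℕ) :=
  tG.filter fun b => topJ c.σ ≤ (span b).1

open Classical in
/-- `reach(c)`: the reachable gold brackets (all of `t_G` at the initial
configuration, whose stack has fewer than two boundaries). -/
noncomputable def reach (tG : Finset (N × ℕ × ℕ)) (c : Config N) :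
    Finset (N × ℕ × ℕ) :=
  if c.σ.length < 2 then tG else leftSet tG c ∪ rightSet tG c

/-- The optimal tree `t*(c) = t ∪ reach(c)`. -/
noncomputable def tstar (tG : Finset (N × ℕ × ℕ)) (c : Config N) :
    Finset (N × ℕ × ℕ) :=
  c.t ∪ reach tG c

/-- `b = next(c)`: the `≺`-minimal element of `left(c)`. -/
def IsNext (tG : Finset (N × ℕ × ℕ)) (c : Config N) (b : N × ℕ × ℕ) : Prop :=
  b ∈ leftSet tG c ∧ ∀ b' ∈ leftSet tG c, Enc (span b) (span b')

/-- The dynamic-oracle policy `dyna(c)` as a predicate on actions. -/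
def Dyna (tG : Finset (N × ℕ × ℕ)) (c : Config N) (a : Action N) : Prop :=
  if c.σ.length < 2 then a = Action.sh
  else if Even c.z then
    ∃ b, IsNext tG c b ∧
      (((span b).1 = topI c.σ ∧ topJ c.σ < (span b).2 ∧ a = Action.sh) ∨
       ((span b).1 < topI c.σ ∧ (span b).2 = topJ c.σ ∧ a = Action.comb) ∨
       ((span b).1 < topI c.σ ∧ topJ c.σ < (span b).2 ∧
          (a = Action.sh ∨ a = Action.comb)))
  else
    (∃ X, (X, topI c.σ, topJ c.σ) ∈ tG ∧ a = Action.label X) ∨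
    ((∀ X, (X, topI c.σ, topJ c.σ) ∉ tG) ∧ a = Action.nolabel)

/-- `F1` of a predicted bracket set `t'` against the gold tree `tG`
(`0` when `t' ∩ tG = ∅`). -/
noncomputable def f1 (tG t' : Finset (N × ℕ × ℕ)) : ℝ :=
  if t' ∩ tG = ∅ then 0
  else
    (2 * (((t' ∩ tG).card : ℝ) / (tG.card : ℝ)) * (((t' ∩ tG).card : ℝ) / (t'.card : ℝ))) /
      ((((t' ∩ tG).card : ℝ) / (tG.card : ℝ)) + (((t' ∩ tG).card : ℝ) / (t'.card : ℝ)))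

/-- `F1(c)`: the best `F1` among trees reachable from `c`. -/
noncomputable def configF1 (n : ℕ) (tG : Finset (N × ℕ × ℕ)) (c : Config N) : ℝ :=
  sSup (f1 tG '' Dset n c)

/-- A run of (applicable) actions from one configuration to another. -/
inductive Run (n : ℕ) : Config N → List (Action N) → Config N → Prop
  | refl (c : Config N) : Run n c [] c
  | step {c c' : Config N} {as : List (Action N)} (a : Action N)
      (happ : App n c a) (h : Run n (doAct c a) as c') : Run n c (a :: as) c'

/-- A run all of whose actions follow the dynamic oracle. -/
inductive DynaRun (n : ℕ) (tG : Finset (N × ℕ × ℕ)) : Config N → Config N → Prop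
  | refl (c : Config N) : DynaRun n tG c c
  | step {c c' : Config N} (a : Action N) (happ : App n c a) (hdyna : Dyna tG c a)
      (h : DynaRun n tG (doAct c a) c') : DynaRun n tG c c'

def isSh : Action N → Bool
  | .sh => true
  | _ => false

def isComb : Action N → Bool
  | .comb => true
  | _ => false

/-- Label-step actions: `label-X` or `nolabel`. -/
def isLabelStep : Action N → Bool
  | .label _ => true
  | .nolabel => true
  | _ => false

end SpanParser

/-!
Valid configurations satisfy an invariant: the stack starts at `0`, increases strictly, is
bounded by `n`, and determines the step counter. At an even step the root `(0, n)` lies in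
`left(c)` unless `c` is final, and the spans of `left(c)` all contain the top span, so by
non-crossing they form a chain and `next(c) = (X, p, q)` exists. Strict encompassment of the
top span `(i, j)` gives the three cases; `sh` is then applicable since `j < q ≤ n`, and `comb`
since a boundary `p < i` on the stack is a third one. At an odd step the counter gives
`z < 4n - 1`, so `nolabel` is applicable.
-/

namespace SpanParser

variable {N : Type*}

section Stack

@[simp]
lemma topJ_append_singleton (l : List ℕ) (x : ℕ) : topJ (l ++ [x]) = x := by
  simp [topJ]

@[simp]
lemma topJ_append_pair (l : List ℕ) (i j : ℕ) : topJ (l ++ [i, j]) = j := by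
  simpa using topJ_append_singleton (l ++ [i]) j

@[simp]
lemma topI_append_pair (l : List ℕ) (i j : ℕ) : topI (l ++ [i, j]) = i := by
  simp [topI]

@[simp]
lemma dropLast_dropLast_append_pair {α : Type*} (l : List α) (i j : α) :
    (l ++ [i, j]).dropLast.dropLast = l := by
  simp

lemma exists_eq_append_pair {α : Type*} {σ : List α} (h : 2 ≤ σ.length) : ∃ l i j, σ = l ++ [i, j] := by
  obtain ⟨l', j, rfl⟩ := σ.eq_nil_or_concat'.resolve_left (by rintro rfl; simp at h)
  obtain ⟨l, i, rfl⟩ := l'.eq_nil_or_concat'.resolve_left (by rintro rfl; simp at h)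
  exact ⟨l, i, j, by simp⟩

lemma le_topJ_of_mem {σ : List ℕ} (hσ : σ.Pairwise (· < ·)) {x : ℕ} (hx : x ∈ σ) :
    x ≤ topJ σ := by
  obtain ⟨l, j, rfl⟩ := σ.eq_nil_or_concat'.resolve_left (List.ne_nil_of_mem hx)
  rw [List.pairwise_append] at hσ
  rcases List.mem_append.mp hx with hx | hx
  · simpa using (hσ.2.2 x hx j (by simp)).le
  · simp_all

variable {l : List ℕ} {i j : ℕ}

lemma lt_of_pairwise_append_pair (h : (l ++ [i, j]).Pairwise (· < ·)) : i < j := by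
  simp_all [List.pairwise_append]

lemma eq_nil_of_pairwise_append_pair_zero (h : (l ++ [0, j]).Pairwise (· < ·)) : l = [] := by
  simp_all [List.pairwise_append, List.eq_nil_iff_forall_not_mem]

lemma ne_nil_of_mem_append_pair_of_lt (h : (l ++ [i, j]).Pairwise (· < ·)) {p : ℕ}
    (hp : p ∈ l ++ [i, j]) (hpi : p < i) : l ≠ [] := by
  have := lt_of_pairwise_append_pair h
  rintro rfl
  simp at hp
  omega

end Stack

/-- `z` counts two steps (the action and its label step) for each of the `topJ σ` shifts and
`topJ σ + 1 - |σ|` combines performed so far, less one while a label step is pending. -/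
structure Inv (n : ℕ) (c : Config N) : Prop where
  head_eq : c.σ.head? = some 0
  sorted : c.σ.Pairwise (· < ·)
  bounded : ∀ x ∈ c.σ, x ≤ n
  step_count : c.z + 2 * c.σ.length + c.z % 2 = 4 * topJ c.σ + 2

namespace Inv

variable {n : ℕ} {c : Config N}

lemma initial (n : ℕ) : Inv n (initial N) where
  head_eq := rfl
  sorted := by simp [SpanParser.initial]
  bounded := by simp [SpanParser.initial]
  step_count := rfl

lemma sh (h : Inv n c) (hev : Even c.z) (hlt : topJ c.σ < n) (t : Finset (N × ℕ × ℕ)) :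
    Inv n ⟨c.z + 1, c.σ ++ [topJ c.σ + 1], t⟩ := by
  refine ⟨by simp [h.head_eq], ?_, ?_, ?_⟩
  · simp only [List.pairwise_append, List.pairwise_singleton, List.mem_singleton]
    exact ⟨h.sorted, trivial, fun x hx _ hy => hy ▸ Nat.lt_succ_of_le (le_topJ_of_mem h.sorted hx)⟩
  · simp only [List.mem_append, List.mem_singleton]
    rintro x (hx | rfl)
    exacts [h.bounded x hx, hlt]
  · have := h.step_count
    simp only [List.length_append, List.length_singleton, topJ_append_singleton]
    rw [Nat.even_iff] at hev
    omega

lemma comb (h : Inv n c) (hev : Even c.z) (hlen : 3 ≤ c.σ.length) (t : Finset (N × ℕ × ℕ)) :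
    Inv n ⟨c.z + 1, c.σ.dropLast.dropLast ++ [topJ c.σ], t⟩ := by
  obtain ⟨l, i, j, hσ⟩ := exists_eq_append_pair (by omega : 2 ≤ c.σ.length)
  have hl : l ≠ [] := by rintro rfl; simp [hσ] at hlen
  have hsub : (l ++ [j]).Sublist c.σ := hσ ▸ (List.sublist_cons_self i [j]).append_left l
  have := h.step_count
  simp only [hσ, dropLast_dropLast_append_pair, topJ_append_pair] at this ⊢
  refine ⟨?_, h.sorted.sublist hsub, fun x hx => h.bounded x (hsub.subset hx), ?_⟩
  · obtain ⟨x, l, rfl⟩ := List.exists_cons_of_ne_nil hl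
    simpa [hσ] using h.head_eq
  · simp only [List.length_append, List.length_cons, List.length_nil,
      topJ_append_singleton] at this ⊢
    rw [Nat.even_iff] at hev
    omega

lemma label_step (h : Inv n c) (hodd : Odd c.z) (t : Finset (N × ℕ × ℕ)) :
    Inv n ⟨c.z + 1, c.σ, t⟩ := by
  have := h.step_count
  rw [Nat.odd_iff] at hodd
  exact ⟨h.head_eq, h.sorted, h.bounded, by dsimp only; omega⟩

lemma doAct [DecidableEq N] (h : Inv n c) {a : Action N} (ha : App n c a) :
    Inv n (doAct c a) :=
  match a, ha with
  | .sh, ⟨hev, _, hlt⟩ => h.sh hev hlt _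
  | .comb, ⟨hev, hlen⟩ => h.comb hev hlen _
  | .label _, ⟨hodd, _⟩ => h.label_step hodd _
  | .nolabel, ⟨hodd, _⟩ => h.label_step hodd _

end Inv

lemma Valid.inv [DecidableEq N] {n : ℕ} {c : Config N} (h : Valid n c) : Inv n c := by
  induction h with
  | refl => exact Inv.initial n
  | tail _ hstep ih =>
    obtain ⟨a, ha, rfl⟩ := hstep
    exact ih.doAct ha

lemma SEnc.cases {i j : ℕ} {s : ℕ × ℕ} (h : SEnc (i, j) s) :
    (s.1 = i ∧ j < s.2) ∨ (s.1 < i ∧ s.2 = j) ∨ (s.1 < i ∧ j < s.2) := by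
  obtain ⟨⟨hp, -, hq⟩, hne⟩ := h
  have : ¬(s.1 = i ∧ s.2 = j) := fun ⟨h1, h2⟩ => hne (Prod.ext h1.symm h2.symm)
  omega

section Oracle

variable {n : ℕ} {tG : Finset (N × ℕ × ℕ)} {c : Config N} {b : N × ℕ × ℕ}

lemma mem_leftSet_iff_of_even (hev : Even c.z) :
    b ∈ leftSet tG c ↔ b ∈ tG ∧ SEnc (topI c.σ, topJ c.σ) (span b) ∧ (span b).1 ∈ c.σ := by
  simp [leftSet, hev]

lemma mem_and_enc_of_mem_leftSet (hb : b ∈ leftSet tG c) :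
    b ∈ tG ∧ Enc (topI c.σ, topJ c.σ) (span b) := by
  simp only [leftSet, Finset.mem_filter] at hb
  split_ifs at hb
  exacts [⟨hb.1, hb.2.1.1⟩, ⟨hb.1, hb.2.1⟩]

lemma IsNext.cases (hev : Even c.z) (hb : IsNext tG c b) :
    ((span b).1 = topI c.σ ∧ topJ c.σ < (span b).2) ∨
      ((span b).1 < topI c.σ ∧ (span b).2 = topJ c.σ) ∨
      ((span b).1 < topI c.σ ∧ topJ c.σ < (span b).2) :=
  SEnc.cases ((mem_leftSet_iff_of_even hev).1 hb.1).2.1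

/-- Gold spans containing a common span are nested, so one of least width is `≺`-minimal. -/
lemma IsGold.exists_isNext (hG : IsGold n tG) (hne : (leftSet tG c).Nonempty) :
    ∃ b, IsNext tG c b := by
  obtain ⟨b, hb, hmin⟩ :=
    Finset.exists_min_image (leftSet tG c) (fun b => (span b).2 - (span b).1) hne
  refine ⟨b, hb, fun b' hb' => ?_⟩
  have hw := hmin b' hb'
  obtain ⟨hbG, hp, hij, hq⟩ := mem_and_enc_of_mem_leftSet hb
  obtain ⟨hbG', hp', -, hq'⟩ := mem_and_enc_of_mem_leftSet hb'
  rcases hG.noncrossing b hbG b' hbG' with h | ⟨h1, -, h2⟩ | h | h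
  · exact h
  · exact ⟨by omega, by omega, by omega⟩
  all_goals omega

lemma Inv.final_of_top_eq (h : Inv n c) (hev : Even c.z) {l : List ℕ}
    (hσ : c.σ = l ++ [0, n]) : Final n c := by
  have hl := eq_nil_of_pairwise_append_pair_zero (hσ ▸ h.sorted)
  subst hl
  have := h.step_count
  simp only [hσ, List.nil_append, List.length_cons, List.length_nil] at this
  have htop : topJ [0, n] = n := rfl
  rw [Nat.even_iff] at hev
  exact ⟨hσ, by omega⟩

lemma Inv.root_mem_leftSet (h : Inv n c) (hev : Even c.z) (hlen : 2 ≤ c.σ.length)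
    (hnf : ¬Final n c) {X : N} (hX : (X, 0, n) ∈ tG) : (X, 0, n) ∈ leftSet tG c := by
  obtain ⟨l, i, j, hσ⟩ := exists_eq_append_pair hlen
  have hij := lt_of_pairwise_append_pair (hσ ▸ h.sorted)
  have hjn := h.bounded j (by simp [hσ])
  have hroot : (i, j) ≠ (0, n) := by
    rintro ⟨⟩
    exact hnf (h.final_of_top_eq hev hσ)
  rw [mem_leftSet_iff_of_even hev]
  refine ⟨hX, ⟨?_, ?_⟩, List.mem_of_mem_head? h.head_eq⟩
  · simpa [hσ, span, Enc] using ⟨hij, hjn⟩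
  · simpa [hσ, span] using hroot

lemma Inv.app_sh_of_length_lt_two (h : Inv n c) (hn : 1 ≤ n) (hlen : c.σ.length < 2) :
    App n c .sh := by
  have hσ : c.σ = [0] := by
    have h0 := h.head_eq
    match hσ : c.σ, hlen with
    | [], _ => simp [hσ] at h0
    | [x], _ => simp_all
  have := h.step_count
  have htop : topJ [0] = 0 := rfl
  simp only [hσ, List.length_singleton] at this
  exact ⟨by rw [Nat.even_iff]; omega, by simp [hσ], by rw [hσ, htop]; omega⟩

lemma Inv.app_comb_of_mem (h : Inv n c) (hev : Even c.z) (hlen : 2 ≤ c.σ.length) {p : ℕ}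
    (hp : p ∈ c.σ) (hpi : p < topI c.σ) : App n c .comb := by
  obtain ⟨l, i, j, hσ⟩ := exists_eq_append_pair hlen
  rw [hσ] at hp hpi
  have hl := ne_nil_of_mem_append_pair_of_lt (hσ ▸ h.sorted) hp (by simpa using hpi)
  refine ⟨hev, ?_⟩
  simpa [hσ, Nat.succ_le_iff, List.length_pos_iff] using hl

lemma Inv.app_nolabel (h : Inv n c) (hodd : ¬Even c.z) (hlen : 2 ≤ c.σ.length) :
    App n c .nolabel := by
  obtain ⟨l, i, j, hσ⟩ := exists_eq_append_pair hlen
  have hjn := h.bounded j (by simp [hσ])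
  have hj : topJ c.σ = j := by simp [hσ]
  have := h.step_count
  rw [Nat.even_iff] at hodd
  exact ⟨Nat.odd_iff.2 (by omega), hlen, by omega⟩

lemma Inv.app_of_dyna (h : Inv n c) (hn : 1 ≤ n) (hG : IsGold n tG) {a : Action N}
    (ha : Dyna tG c a) : App n c a := by
  unfold Dyna at ha
  split_ifs at ha with hlen hev
  · exact ha ▸ h.app_sh_of_length_lt_two hn hlen
  · obtain ⟨b, hb, hcases⟩ := ha
    obtain ⟨hbG, -, hmem⟩ := (mem_leftSet_iff_of_even hev).1 hb.1
    have hq := (hG.validSpans b hbG).2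
    rcases hcases with ⟨-, hj, rfl⟩ | ⟨hp, -, rfl⟩ | ⟨hp, hj, rfl | rfl⟩
    · exact ⟨hev, fun h0 => by simp [h0] at hlen, by omega⟩
    · exact h.app_comb_of_mem hev (by omega) hmem hp
    · exact ⟨hev, fun h0 => by simp [h0] at hlen, by omega⟩
    · exact h.app_comb_of_mem hev (by omega) hmem hp
  · rcases ha with ⟨X, -, rfl⟩ | ⟨-, rfl⟩
    · exact ⟨Nat.not_even_iff_odd.1 hev, by omega⟩
    · exact h.app_nolabel hev (by omega)

lemma Inv.exists_dyna (h : Inv n c) (hG : IsGold n tG) (hnf : ¬Final n c) :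
    ∃ a, Dyna tG c a := by
  unfold Dyna
  split_ifs with hlen hev
  · exact ⟨_, rfl⟩
  · obtain ⟨X, hX⟩ := hG.root
    obtain ⟨b, hb⟩ := hG.exists_isNext ⟨_, h.root_mem_leftSet hev (by omega) hnf hX⟩
    rcases hb.cases hev with hcase | hcase | hcase
    · exact ⟨.sh, b, hb, .inl ⟨hcase.1, hcase.2, rfl⟩⟩
    · exact ⟨.comb, b, hb, .inr (.inl ⟨hcase.1, hcase.2, rfl⟩)⟩
    · exact ⟨.sh, b, hb, .inr (.inr ⟨hcase.1, hcase.2, .inl rfl⟩)⟩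
  · by_cases hX : ∃ X, (X, topI c.σ, topJ c.σ) ∈ tG
    · obtain ⟨X, hX⟩ := hX
      exact ⟨.label X, .inl ⟨X, hX, rfl⟩⟩
    · exact ⟨.nolabel, .inr ⟨not_exists.1 hX, rfl⟩⟩

end Oracle

variable [DecidableEq N]

/-- The dynamic oracle is always executable: at every valid non-final
configuration, `dyna(c)` is nonempty and all its actions are applicable; in
particular at even steps the comparison of `next(c) = (X, p, q)` with the top
span `(i, j)` always falls into one of the three cases `p = i ∧ q > j`,
`p < i ∧ q = j`, or `p < i ∧ q > j`. -/
theorem dyna_executable (n : ℕ) (hn : 1 ≤ n) (tG : Finset (N × ℕ × ℕ))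
    (hG : IsGold n tG) (c : Config N) (hc : Valid n c) (hnf : ¬ Final n c) :
    (∃ a, Dyna tG c a) ∧ (∀ a, Dyna tG c a → App n c a) ∧
      (Even c.z → 2 ≤ c.σ.length → ∀ b, IsNext tG c b →
        ((span b).1 = topI c.σ ∧ topJ c.σ < (span b).2) ∨
        ((span b).1 < topI c.σ ∧ (span b).2 = topJ c.σ) ∨
        ((span b).1 < topI c.σ ∧ topJ c.σ < (span b).2)) :=
  ⟨hc.inv.exists_dyna hG hnf, fun _ => hc.inv.app_of_dyna hn hG,
    fun hev _ _ hb => IsNext.cases hev hb⟩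

end SpanParser
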